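/- arXiv:math/0609375 — 3 statements merged into one kernel-verified Lean document; each statement's English description precedes it below -/
import Mathlib

section
/- For every n ≥ 1, the connected component Mₙ⁺(SO(3)) of the identity n-tuple in Hom(ℤⁿ, SO(3)) equals the set of n-tuples (A₁,…,Aₙ) ∈ Hom(ℤⁿ, SO(3)) for which there exists a nonzero vector v ∈ ℝ³ with Aᵢv = v for all i (i.e. all the Aᵢ are rotations about a common axis). -/
open Matrix

/-- The space `Hom(ℤⁿ, G)` of ordered commuting `n`-tuples of elements of a topological
monoid `G`, topologized as a subspace of `Gⁿ`. -/
abbrev CommTuples (n : ℕ) (G : Type*) [Monoid G] [TopologicalSpace G] : Type _ :=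
  {f : Fin n → G // ∀ i j, f i * f j = f j * f i}

/-- The special orthogonal group `SO(3)` of 3×3 real matrices. -/
abbrev SO3 : Type _ := Matrix.specialOrthogonalGroup (Fin 3) ℝ

/-- The identity `n`-tuple `(id, …, id)` in `Hom(ℤⁿ, G)`. -/
def oneTuple (n : ℕ) (G : Type*) [Monoid G] [TopologicalSpace G] : CommTuples n G :=
  ⟨fun _ => 1, fun _ _ => rfl⟩

/-! Let `S` be the set of commuting tuples with a common axis. It is path connected: all `Aᵢ`
are rotations `F Rₓ(θᵢ) F⁻¹` about the common axis, and `t ↦ (F Rₓ(t θᵢ) F⁻¹)ᵢ` joins the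
identity tuple to `(Aᵢ)ᵢ` through commuting tuples. It is closed, being the projection of a
closed set along the compact unit sphere. It is open: a commuting tuple without a common axis
contains two half-turns about perpendicular axes, so `tr Aᵢ = tr Aⱼ = tr (Aᵢ Aⱼ) = -1` for some
`i, j`, while two half-turns about the same axis multiply to the identity, of trace `3`. -/

open Real

local notation "M₃" => Matrix (Fin 3) (Fin 3) ℝ
local notation "e₀" => (Pi.single 0 1 : Fin 3 → ℝ)
local notation "e₁" => (Pi.single 1 1 : Fin 3 → ℝ)

section Orthogonal

variable {n : Type*} [Fintype n]

lemma mem_specialOrthogonalGroup_iff_transpose_mul_self [DecidableEq n] {R : Type*} [CommRing R]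
    {A : Matrix n n R} : A ∈ specialOrthogonalGroup n R ↔ Aᵀ * A = 1 ∧ A.det = 1 := by
  rw [mem_specialOrthogonalGroup_iff, mem_orthogonalGroup_iff']

lemma dotProduct_mulVec_mulVec_of_transpose_mul_self [DecidableEq n] {R : Type*}
    [CommSemiring R] {A : Matrix n n R} (hA : Aᵀ * A = 1) (x y : n → R) :
    (A *ᵥ x) ⬝ᵥ (A *ᵥ y) = x ⬝ᵥ y := by
  rw [dotProduct_mulVec, ← mulVec_transpose, mulVec_mulVec, hA, one_mulVec]

lemma eq_one_of_transpose_mul_self_of_trace_eq_card [DecidableEq n] {A : Matrix n n ℝ}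
    (hA : Aᵀ * A = 1) (htr : A.trace = Fintype.card n) : A = 1 := by
  have h : ((A - 1)ᴴ * (A - 1)).trace = 0 := by
    simp only [conjTranspose_eq_transpose_of_trivial, transpose_sub, transpose_one, sub_mul,
      mul_sub, hA, one_mul, mul_one, trace_sub, trace_transpose, htr, trace_one, sub_self]
  exact sub_eq_zero.mp (trace_conjTranspose_mul_self_eq_zero_iff.mp h)

lemma det_sub_one_eq_zero_of_transpose_mul_self [DecidableEq n] {A : Matrix n n ℝ}
    (hA : Aᵀ * A = 1) (hdet : A.det = 1) (hn : Odd (Fintype.card n)) : (A - 1).det = 0 := by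
  have h : (A - 1).det = -(A - 1).det := calc
    (A - 1).det = (Aᵀ * (A - 1)).det := by rw [det_mul, det_transpose, hdet, one_mul]
    _ = (-(A - 1)ᵀ).det := by rw [mul_sub, hA, mul_one, transpose_sub, transpose_one, neg_sub]
    _ = -(A - 1).det := by rw [det_neg, det_transpose, hn.neg_one_pow, neg_one_mul]
  linarith

lemma exists_smul_dotProduct_self_eq_one {v : n → ℝ} (hv : v ≠ 0) :
    ∃ t : ℝ, (t • v) ⬝ᵥ (t • v) = 1 := by
  have hpos : 0 < v ⬝ᵥ v :=
    lt_of_le_of_ne (Finset.sum_nonneg fun i _ => mul_self_nonneg (v i))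
      (Ne.symm (dotProduct_self_eq_zero.not.mpr hv))
  refine ⟨(√(v ⬝ᵥ v))⁻¹, ?_⟩
  rw [smul_dotProduct, dotProduct_smul, smul_eq_mul, smul_eq_mul, ← mul_assoc, ← sq, inv_pow,
    sq_sqrt hpos.le, inv_mul_cancel₀ hpos.ne']

lemma eq_neg_of_dotProduct_eq_neg_one {x y : n → ℝ} (hx : x ⬝ᵥ x = 1) (hy : y ⬝ᵥ y = 1)
    (hxy : x ⬝ᵥ y = -1) : y = -x := by
  have h : (x + y) ⬝ᵥ (x + y) = 0 := by
    rw [add_dotProduct, dotProduct_add, dotProduct_add, hx, hy, hxy, dotProduct_comm y x, hxy]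
    norm_num
  exact eq_neg_of_add_eq_zero_right (dotProduct_self_eq_zero.mp h)

end Orthogonal

lemma exists_cos_eq_and_sin_eq {a b : ℝ} (h : a ^ 2 + b ^ 2 = 1) :
    ∃ θ, cos θ = a ∧ sin θ = b := by
  have hz : ‖(⟨a, b⟩ : ℂ)‖ = 1 := by
    rw [Complex.norm_def, Complex.normSq_mk, ← sq, ← sq, h, sqrt_one]
  refine ⟨Complex.arg ⟨a, b⟩, ?_, ?_⟩
  · simpa [hz] using Complex.norm_mul_cos_arg ⟨a, b⟩
  · simpa [hz] using Complex.norm_mul_sin_arg ⟨a, b⟩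

lemma exists_orthonormal_partner {u : Fin 3 → ℝ} (hu : u ⬝ᵥ u = 1) :
    ∃ w : Fin 3 → ℝ, w ⬝ᵥ w = 1 ∧ u ⬝ᵥ w = 0 := by
  obtain ⟨k, hk⟩ : ∃ k, u k ^ 2 < 1 := by
    by_contra! h
    simp only [dotProduct, Fin.sum_univ_three] at hu
    nlinarith [h 0, h 1, h 2]
  have hne : u ⨯₃ Pi.single k 1 ≠ 0 := by
    intro h0
    have hnorm := congrArg (fun x => x ⬝ᵥ x) h0
    simp only [cross_dot_cross, hu, dotProduct_single, single_dotProduct, Pi.single_eq_same,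
      mul_one, one_mul, dotProduct_zero] at hnorm
    nlinarith
  obtain ⟨t, ht⟩ := exists_smul_dotProduct_self_eq_one hne
  exact ⟨_, ht, by rw [dotProduct_smul, dot_self_cross, smul_zero]⟩

namespace SO3

lemma transpose_mul_self (A : SO3) : (A : M₃)ᵀ * A = 1 :=
  (mem_specialOrthogonalGroup_iff_transpose_mul_self.mp A.2).1

lemma dotProduct_mulVec_mulVec (A : SO3) (x y : Fin 3 → ℝ) :
    ((A : M₃) *ᵥ x) ⬝ᵥ ((A : M₃) *ᵥ y) = x ⬝ᵥ y :=
  dotProduct_mulVec_mulVec_of_transpose_mul_self (transpose_mul_self A) x y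

lemma mul_mulVec (A B : SO3) (v : Fin 3 → ℝ) :
    ((A * B : SO3) : M₃) *ᵥ v = (A : M₃) *ᵥ ((B : M₃) *ᵥ v) := by
  rw [Submonoid.coe_mul, mulVec_mulVec]

lemma inv_mulVec_eq_of_mulVec_eq {A : SO3} {v w : Fin 3 → ℝ} (h : (A : M₃) *ᵥ v = w) :
    ((A⁻¹ : SO3) : M₃) *ᵥ w = v := by
  rw [← h, ← mul_mulVec, inv_mul_cancel, OneMemClass.coe_one, Matrix.one_mulVec]

lemma trace_conj (F A : SO3) : ((F * A * F⁻¹ : SO3) : M₃).trace = (A : M₃).trace := by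
  rw [Submonoid.coe_mul, trace_mul_comm, Submonoid.coe_mul, ← mul_assoc, ← Submonoid.coe_mul,
    inv_mul_cancel, OneMemClass.coe_one, one_mul]

lemma exists_frame {u w : Fin 3 → ℝ} (hu : u ⬝ᵥ u = 1) (hw : w ⬝ᵥ w = 1) (huw : u ⬝ᵥ w = 0) :
    ∃ F : SO3, (F : M₃) *ᵥ e₀ = u ∧ (F : M₃) *ᵥ e₁ = w := by
  have hwu : w ⬝ᵥ u = 0 := by rw [dotProduct_comm, huw]
  have hx : (u ⨯₃ w) ⬝ᵥ (u ⨯₃ w) = 1 := by rw [cross_dot_cross, hu, hw, huw, hwu]; norm_num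
  set P : M₃ := of ![u, w, u ⨯₃ w]
  have hP : P * Pᵀ = 1 := by
    have hrow : ∀ i j, (P * Pᵀ) i j = ![u, w, u ⨯₃ w] i ⬝ᵥ ![u, w, u ⨯₃ w] j := fun _ _ => rfl
    ext i j
    fin_cases i <;> fin_cases j <;>
      simp [hrow, hu, hw, huw, hwu, hx, dot_self_cross, dot_cross_self, dotProduct_comm (u ⨯₃ w)]
  have hdet : P.det = 1 := by
    change det ![u, w, u ⨯₃ w] = 1
    rw [← triple_product_eq_det, triple_product_permutation, triple_product_permutation, hx]
  have hF : Pᵀ ∈ specialOrthogonalGroup (Fin 3) ℝ :=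
    mem_specialOrthogonalGroup_iff_transpose_mul_self.mpr
      ⟨by rwa [transpose_transpose], by rwa [det_transpose]⟩
  exact ⟨⟨Pᵀ, hF⟩, by simp [P], by simp [P]⟩

noncomputable def rotX (θ : ℝ) : SO3 :=
  ⟨!![1, 0, 0; 0, cos θ, -sin θ; 0, sin θ, cos θ],
    mem_specialOrthogonalGroup_iff_transpose_mul_self.mpr ⟨by
      ext i j
      fin_cases i <;> fin_cases j <;> simp [mul_apply, Fin.sum_univ_three, ← sq] <;> ring,
      by simp [det_fin_three, ← sq]⟩⟩

lemma coe_rotX (θ : ℝ) : (rotX θ : M₃) = !![1, 0, 0; 0, cos θ, -sin θ; 0, sin θ, cos θ] := rfl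

lemma rotX_add (θ φ : ℝ) : rotX (θ + φ) = rotX θ * rotX φ := by
  ext i j
  fin_cases i <;> fin_cases j <;>
    simp [coe_rotX, mul_apply, Fin.sum_univ_three, cos_add, sin_add] <;> ring

lemma rotX_zero : rotX 0 = 1 := by
  ext i j
  fin_cases i <;> fin_cases j <;> simp [coe_rotX]

lemma continuous_rotX : Continuous rotX := by
  refine Continuous.subtype_mk ?_ _
  refine continuous_matrix fun i j => ?_
  fin_cases i <;> fin_cases j <;> simp <;> fun_prop

lemma trace_rotX (θ : ℝ) : (rotX θ : M₃).trace = 1 + 2 * cos θ := by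
  simp [coe_rotX, trace_fin_three]; ring

lemma dotProduct_rotX_mulVec (θ : ℝ) : e₁ ⬝ᵥ ((rotX θ : M₃) *ᵥ e₁) = cos θ := by
  simp [coe_rotX]

lemma commute_rotX (s t : ℝ) : Commute (rotX s) (rotX t) := by
  rw [Commute, SemiconjBy, ← rotX_add, ← rotX_add, add_comm]

lemma exists_eq_rotX {B : SO3} (hB : (B : M₃) *ᵥ e₀ = e₀) : ∃ θ, B = rotX θ := by
  obtain ⟨M, hM⟩ := B
  change M *ᵥ e₀ = e₀ at hB
  obtain ⟨hMM, hdet⟩ := mem_specialOrthogonalGroup_iff_transpose_mul_self.mp hM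
  have hMM' : M * Mᵀ = 1 := mul_eq_one_comm.mp hMM
  obtain ⟨h00, h10, h20⟩ : M 0 0 = 1 ∧ M 1 0 = 0 ∧ M 2 0 = 0 :=
    ⟨by simpa using congrFun hB 0, by simpa using congrFun hB 1, by simpa using congrFun hB 2⟩
  have hrow0 : 1 + M 0 1 ^ 2 + M 0 2 ^ 2 = 1 := by
    simpa [mul_apply, Fin.sum_univ_three, h00, sq] using congrFun (congrFun hMM' 0) 0
  have h01 : M 0 1 = 0 := by nlinarith
  have h02 : M 0 2 = 0 := by nlinarith
  have hcol1 : M 1 1 ^ 2 + M 2 1 ^ 2 = 1 := by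
    simpa [mul_apply, Fin.sum_univ_three, h01, sq] using congrFun (congrFun hMM 1) 1
  have hcol12 : M 1 1 * M 1 2 + M 2 1 * M 2 2 = 0 := by
    simpa [mul_apply, Fin.sum_univ_three, h01] using congrFun (congrFun hMM 1) 2
  have hdet' : M 1 1 * M 2 2 - M 1 2 * M 2 1 = 1 := by
    simpa [det_fin_three, h00, h10, h20] using hdet
  have h12 : M 1 2 = -M 2 1 := by
    linear_combination (-M 1 2) * hcol1 - M 2 1 * hdet' + M 1 1 * hcol12
  have h22 : M 2 2 = M 1 1 := by
    linear_combination (-M 2 2) * hcol1 + M 1 1 * hdet' + M 2 1 * hcol12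
  obtain ⟨θ, hc, hs⟩ := exists_cos_eq_and_sin_eq hcol1
  refine ⟨θ, Subtype.ext ?_⟩
  ext i j
  fin_cases i <;> fin_cases j <;> simp [coe_rotX, h00, h10, h20, h01, h02, h12, h22, hc, hs]

lemma exists_eq_conj_rotX {A F : SO3} {u : Fin 3 → ℝ} (hF : (F : M₃) *ᵥ e₀ = u)
    (hA : (A : M₃) *ᵥ u = u) : ∃ θ, A = F * rotX θ * F⁻¹ := by
  obtain ⟨θ, hθ⟩ := exists_eq_rotX (B := F⁻¹ * A * F) (by
    rw [mul_mulVec, mul_mulVec, hF, hA, inv_mulVec_eq_of_mulVec_eq hF])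
  exact ⟨θ, by rw [← hθ]; group⟩

/-- `u ⬝ᵥ A u` is the cosine of the rotation angle of `A`, whose trace is `1 + 2 cos θ`. -/
lemma trace_eq_one_add_two_mul_dotProduct {A : SO3} {y u : Fin 3 → ℝ} (hy : y ⬝ᵥ y = 1)
    (hu : u ⬝ᵥ u = 1) (hyu : y ⬝ᵥ u = 0) (hA : (A : M₃) *ᵥ y = y) :
    (A : M₃).trace = 1 + 2 * (u ⬝ᵥ ((A : M₃) *ᵥ u)) := by
  obtain ⟨F, hFy, hFu⟩ := exists_frame hy hu hyu
  obtain ⟨θ, rfl⟩ := exists_eq_conj_rotX hFy hA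
  rw [trace_conj, trace_rotX, mul_mulVec, mul_mulVec, inv_mulVec_eq_of_mulVec_eq hFu, ← hFu,
    dotProduct_mulVec_mulVec, dotProduct_rotX_mulVec]

lemma exists_mulVec_eq_self (A : SO3) : ∃ u : Fin 3 → ℝ, u ⬝ᵥ u = 1 ∧ (A : M₃) *ᵥ u = u := by
  obtain ⟨hA, hdet⟩ := mem_specialOrthogonalGroup_iff_transpose_mul_self.mp A.2
  obtain ⟨v, hv0, hv⟩ := exists_mulVec_eq_zero_iff.mpr
    (det_sub_one_eq_zero_of_transpose_mul_self hA hdet ⟨1, rfl⟩)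
  obtain ⟨t, ht⟩ := exists_smul_dotProduct_self_eq_one hv0
  rw [sub_mulVec, Matrix.one_mulVec, sub_eq_zero] at hv
  exact ⟨t • v, ht, by rw [mulVec_smul, hv]⟩

lemma eq_one_of_mulVec_eq_self_of_orthonormal {A : SO3} {y u : Fin 3 → ℝ} (hy : y ⬝ᵥ y = 1)
    (hu : u ⬝ᵥ u = 1) (hyu : y ⬝ᵥ u = 0) (hAy : (A : M₃) *ᵥ y = y) (hAu : (A : M₃) *ᵥ u = u) :
    A = 1 := by
  refine Subtype.ext (eq_one_of_transpose_mul_self_of_trace_eq_card (transpose_mul_self A) ?_)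
  rw [trace_eq_one_add_two_mul_dotProduct hy hu hyu hAy, hAu, hu]
  norm_num

lemma eq_smul_of_mulVec_eq_self {A : SO3} (hA : A ≠ 1) {u x : Fin 3 → ℝ} (hu : u ⬝ᵥ u = 1)
    (hAu : (A : M₃) *ᵥ u = u) (hAx : (A : M₃) *ᵥ x = x) : x = (x ⬝ᵥ u) • u := by
  by_contra hne
  obtain ⟨t, ht⟩ := exists_smul_dotProduct_self_eq_one (sub_ne_zero.mpr hne)
  refine hA (eq_one_of_mulVec_eq_self_of_orthonormal hu ht ?_ hAu ?_)
  · simp only [dotProduct_smul, dotProduct_sub, hu, dotProduct_comm u x, smul_eq_mul]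
    ring
  · rw [mulVec_smul, mulVec_sub, mulVec_smul, hAx, hAu]

lemma mulVec_eq_self_or_eq_neg_of_commute {A B : SO3} (hA : A ≠ 1) (hAB : Commute A B)
    {u : Fin 3 → ℝ} (hu : u ⬝ᵥ u = 1) (hAu : (A : M₃) *ᵥ u = u) :
    (B : M₃) *ᵥ u = u ∨ (B : M₃) *ᵥ u = -u := by
  have hfix : (A : M₃) *ᵥ ((B : M₃) *ᵥ u) = (B : M₃) *ᵥ u := by
    rw [← mul_mulVec, hAB.eq, mul_mulVec, hAu]
  have hBu := eq_smul_of_mulVec_eq_self hA hu hAu hfix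
  have hsq : ((B : M₃) *ᵥ u ⬝ᵥ u) ^ 2 = 1 := by
    have := dotProduct_mulVec_mulVec B u u
    rw [hBu, smul_dotProduct, dotProduct_smul, hu] at this
    simpa [sq] using this
  rcases sq_eq_one_iff.mp hsq with h | h
  · left; rw [hBu, h, one_smul]
  · right; rw [hBu, h, neg_one_smul]

lemma trace_eq_neg_one_of_mulVec_eq_neg {A : SO3} {u : Fin 3 → ℝ} (hu : u ⬝ᵥ u = 1)
    (hAu : (A : M₃) *ᵥ u = -u) : (A : M₃).trace = -1 := by
  obtain ⟨y, hy, hAy⟩ := exists_mulVec_eq_self A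
  have hyu : y ⬝ᵥ u = 0 := by
    have := dotProduct_mulVec_mulVec A y u
    rw [hAy, hAu, dotProduct_neg] at this
    linarith
  rw [trace_eq_one_add_two_mul_dotProduct hy hu hyu hAy, hAu, dotProduct_neg, hu]
  norm_num

lemma trace_mul_eq_three_of_trace_eq_neg_one {A B : SO3} {v : Fin 3 → ℝ} (hv : v ≠ 0)
    (hAv : (A : M₃) *ᵥ v = v) (hBv : (B : M₃) *ᵥ v = v) (hA : (A : M₃).trace = -1)
    (hB : (B : M₃).trace = -1) :
    ((A * B : SO3) : M₃).trace = 3 := by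
  obtain ⟨t, hy⟩ := exists_smul_dotProduct_self_eq_one hv
  obtain ⟨w, hw, hyw⟩ := exists_orthonormal_partner hy
  have hneg : ∀ C : SO3, (C : M₃) *ᵥ v = v → (C : M₃).trace = -1 → (C : M₃) *ᵥ w = -w := by
    intro C hCv hC
    have hCy : (C : M₃) *ᵥ (t • v) = t • v := by rw [mulVec_smul, hCv]
    rw [trace_eq_one_add_two_mul_dotProduct hy hw hyw hCy] at hC
    exact eq_neg_of_dotProduct_eq_neg_one hw (by rw [dotProduct_mulVec_mulVec, hw]) (by linarith)
  have hABy : ((A * B : SO3) : M₃) *ᵥ (t • v) = t • v := by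
    rw [mul_mulVec, mulVec_smul, mulVec_smul, hBv, hAv]
  rw [trace_eq_one_add_two_mul_dotProduct hy hw hyw hABy, mul_mulVec, hneg B hBv hB, mulVec_neg,
    hneg A hAv hA, neg_neg, hw]
  norm_num

lemma exists_trace_eq_neg_one_of_no_common_axis {ι : Type*} {A : ι → SO3}
    (hcomm : ∀ i j, Commute (A i) (A j))
    (h : ∀ v : Fin 3 → ℝ, (∀ i, (A i : M₃) *ᵥ v = v) → v = 0) :
    ∃ i j, (A i : M₃).trace = -1 ∧ (A j : M₃).trace = -1 ∧
      ((A i * A j : SO3) : M₃).trace = -1 := by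
  have not_common : ∀ u : Fin 3 → ℝ, u ⬝ᵥ u = 1 → ∃ i, (A i : M₃) *ᵥ u ≠ u := by
    intro u hu
    by_contra! hall
    simp [h u hall] at hu
  obtain ⟨i, hi⟩ : ∃ i, A i ≠ 1 := by
    by_contra! hall
    obtain ⟨i, hi⟩ := not_common e₀ (by simp)
    rw [hall i, OneMemClass.coe_one, Matrix.one_mulVec] at hi
    exact hi rfl
  obtain ⟨u, hu, hiu⟩ := exists_mulVec_eq_self (A i)
  obtain ⟨j, hju⟩ := not_common u hu
  replace hju := (mulVec_eq_self_or_eq_neg_of_commute hi (hcomm i j) hu hiu).resolve_left hju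
  have hj : A j ≠ 1 := by
    rintro hj
    rw [hj, OneMemClass.coe_one, Matrix.one_mulVec, self_eq_neg] at hju
    simp [hju] at hu
  obtain ⟨w, hw, hjw⟩ := exists_mulVec_eq_self (A j)
  have huw : u ⬝ᵥ w = 0 := by
    have := dotProduct_mulVec_mulVec (A j) u w
    rw [hju, hjw, neg_dotProduct] at this
    linarith
  have hiw : (A i : M₃) *ᵥ w = -w :=
    (mulVec_eq_self_or_eq_neg_of_commute hj (hcomm j i) hw hjw).resolve_left fun hiw =>
      hi (eq_one_of_mulVec_eq_self_of_orthonormal hu hw huw hiu hiw)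
  refine ⟨i, j, trace_eq_neg_one_of_mulVec_eq_neg hw hiw, trace_eq_neg_one_of_mulVec_eq_neg hu hju,
    trace_eq_neg_one_of_mulVec_eq_neg hu ?_⟩
  rw [mul_mulVec, hju, mulVec_neg, hiu]

end SO3

lemma joined_oneTuple_of_forall_mem_range {G : Type*} [Monoid G] [TopologicalSpace G] {n : ℕ}
    {φ : ℝ → G} (hφ : Continuous φ) (h0 : φ 0 = 1) (hcomm : ∀ s t, Commute (φ s) (φ t))
    {f : CommTuples n G} (hf : ∀ i, f.val i ∈ Set.range φ) : Joined (oneTuple n G) f := by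
  choose θ hθ using hf
  refine ⟨{ toFun := fun t => ⟨fun i => φ (t * θ i), fun i j => hcomm _ _⟩
            continuous_toFun := ?_, source' := ?_, target' := ?_ }⟩
  · exact (continuous_pi fun i => hφ.comp (by fun_prop)).subtype_mk _
  · exact Subtype.ext (funext fun i => by simp [h0, oneTuple])
  · exact Subtype.ext (funext fun i => by simp [hθ])

def commonAxisSet (n : ℕ) : Set (CommTuples n SO3) :=
  {f | ∃ v : Fin 3 → ℝ, v ≠ 0 ∧ ∀ i, ((f.val i : Matrix (Fin 3) (Fin 3) ℝ)) *ᵥ v = v}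

section CommonAxis

variable {n : ℕ}

lemma continuous_coe_apply (i : Fin n) : Continuous fun f : CommTuples n SO3 => (f.val i : M₃) :=
  continuous_subtype_val.comp ((continuous_apply i).comp continuous_subtype_val)

lemma joined_oneTuple_of_mem_commonAxisSet {f : CommTuples n SO3} (hf : f ∈ commonAxisSet n) :
    Joined (oneTuple n SO3) f := by
  obtain ⟨v, hv, hfv⟩ := hf
  obtain ⟨t, hu⟩ := exists_smul_dotProduct_self_eq_one hv
  obtain ⟨w, hw, huw⟩ := exists_orthonormal_partner hu
  obtain ⟨F, hF, -⟩ := SO3.exists_frame hu hw huw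
  refine joined_oneTuple_of_forall_mem_range (φ := fun θ => MulAut.conj F (SO3.rotX θ))
    ?_ (by simp [SO3.rotX_zero]) (fun s t => (SO3.commute_rotX s t).map (MulAut.conj F)) fun i => ?_
  · simp only [MulAut.conj_apply]
    exact (continuous_const.mul SO3.continuous_rotX).mul continuous_const
  · obtain ⟨θ, hθ⟩ := SO3.exists_eq_conj_rotX hF (by rw [mulVec_smul, hfv i])
    exact ⟨θ, hθ.symm⟩

lemma isClosed_commonAxisSet : IsClosed (commonAxisSet n) := by
  have h : commonAxisSet n = Prod.fst '' {p : CommTuples n SO3 × Metric.sphere (0 : Fin 3 → ℝ) 1 |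
      ∀ i, (p.1.val i : M₃) *ᵥ p.2 = p.2} := by
    ext f
    constructor
    · rintro ⟨v, hv, hfv⟩
      exact ⟨(f, ⟨‖v‖⁻¹ • v, by simpa using norm_smul_inv_norm (𝕜 := ℝ) hv⟩),
        fun i => by simp [mulVec_smul, hfv i], rfl⟩
    · rintro ⟨⟨f, v⟩, hfv, rfl⟩
      exact ⟨v, ne_zero_of_mem_unit_sphere v, hfv⟩
  rw [h, Set.ofPred_forall]
  exact isClosedMap_fst_of_compactSpace _ (isClosed_iInter fun i => isClosed_eq
    (((continuous_coe_apply i).comp continuous_fst).matrix_mulVec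
      (continuous_subtype_val.comp continuous_snd)) (continuous_subtype_val.comp continuous_snd))

lemma isOpen_commonAxisSet : IsOpen (commonAxisSet n) := by
  have h : (commonAxisSet n)ᶜ = ⋃ i, ⋃ j, {f : CommTuples n SO3 | (f.val i : M₃).trace = -1 ∧
      (f.val j : M₃).trace = -1 ∧ ((f.val i * f.val j : SO3) : M₃).trace = -1} := by
    ext f
    simp only [Set.mem_compl_iff, Set.mem_iUnion, Set.mem_ofPred_eq]
    constructor
    · intro hf
      exact SO3.exists_trace_eq_neg_one_of_no_common_axis f.2
        fun v hv => by_contra fun hv0 => hf ⟨v, hv0, hv⟩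
    · rintro ⟨i, j, hi, hj, hij⟩ ⟨v, hv, hfv⟩
      have := SO3.trace_mul_eq_three_of_trace_eq_neg_one hv (hfv i) (hfv j) hi hj
      linarith
  rw [← isClosed_compl_iff, h]
  exact isClosed_iUnion_of_finite fun i => isClosed_iUnion_of_finite fun j =>
    (isClosed_eq (continuous_coe_apply i).matrix_trace continuous_const).inter
      ((isClosed_eq (continuous_coe_apply j).matrix_trace continuous_const).inter
        (isClosed_eq ((continuous_coe_apply i).mul (continuous_coe_apply j)).matrix_trace
          continuous_const))

end CommonAxis

theorem MPlus_SO3_eq_common_axis_general (n : ℕ) :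
    connectedComponent (oneTuple n SO3) =
      {f : CommTuples n SO3 |
        ∃ v : Fin 3 → ℝ, v ≠ 0 ∧
          ∀ i, ((f.val i : Matrix (Fin 3) (Fin 3) ℝ)) *ᵥ v = v} := by
  have hone : oneTuple n SO3 ∈ commonAxisSet n :=
    ⟨e₀, by simp, fun i => by simp only [oneTuple, OneMemClass.coe_one, Matrix.one_mulVec]⟩
  refine Set.Subset.antisymm
    (IsClopen.connectedComponent_subset ⟨isClosed_commonAxisSet, isOpen_commonAxisSet⟩ hone)
    fun f hf => ?_
  exact pathComponent_subset_component _ (joined_oneTuple_of_mem_commonAxisSet hf)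

/-- For every `n ≥ 1`, the connected component `Mₙ⁺(SO(3))` of the identity `n`-tuple in
`Hom(ℤⁿ, SO(3))` is exactly the set of commuting `n`-tuples `(A₁, …, Aₙ)` admitting a
common nonzero fixed vector `v` (i.e. all the `Aᵢ` are rotations about a common axis). -/
theorem MPlus_SO3_eq_common_axis (n : ℕ) (hn : 1 ≤ n) :
    connectedComponent (oneTuple n SO3) =
      {f : CommTuples n SO3 |
        ∃ v : Fin 3 → ℝ, v ≠ 0 ∧
          ∀ i, ((f.val i : Matrix (Fin 3) (Fin 3) ℝ)) *ᵥ v = v} :=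
  MPlus_SO3_eq_common_axis_general n
end

section
/- The quotient of the Stiefel manifold V₂(ℝ³) = {(v₁, v₂) ∈ S² × S² : ⟨v₁, v₂⟩ = 0} by the equivalence relation (v₁, v₂) ∼ (ε₁v₁, ε₂v₂), ε₁, ε₂ ∈ {±1}, is homeomorphic to the orbit space S³/Q₈, where S³ is the unit sphere in the quaternions ℍ and Q₈ = {±1, ±i, ±j, ±k} acts on S³ by quaternion multiplication. -/
open Matrix Quaternion

/-- The Stiefel manifold `V₂(ℝ³)` of orthonormal 2-frames in `ℝ³`, as the subspace
`{(v₁, v₂) ∈ S² × S² : ⟨v₁, v₂⟩ = 0}` of `S² × S²`. -/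
abbrev V2R3 : Type _ :=
  {p : (Fin 3 → ℝ) × (Fin 3 → ℝ) // p.1 ⬝ᵥ p.1 = 1 ∧ p.2 ⬝ᵥ p.2 = 1 ∧ p.1 ⬝ᵥ p.2 = 0}

/-- The relation `(v₁, v₂) ∼ (ε₁ v₁, ε₂ v₂)` for signs `ε₁, ε₂ ∈ {±1}` on `V₂(ℝ³)`. -/
def signRel (p q : V2R3) : Prop :=
  ∃ ε₁ ε₂ : ℝ, (ε₁ = 1 ∨ ε₁ = -1) ∧ (ε₂ = 1 ∨ ε₂ = -1) ∧
    q.val.1 = ε₁ • p.val.1 ∧ q.val.2 = ε₂ • p.val.2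

/-- The unit sphere `S³` in the quaternions `ℍ`. -/
abbrev S3 : Type _ := {q : ℍ[ℝ] // ‖q‖ = 1}

/-- The quaternion group `Q₈ = {±1, ±i, ±j, ±k}` as a subset of the quaternions. -/
def Q8set : Set ℍ[ℝ] :=
  {1, -1, ⟨0, 1, 0, 0⟩, -⟨0, 1, 0, 0⟩, ⟨0, 0, 1, 0⟩, -⟨0, 0, 1, 0⟩, ⟨0, 0, 0, 1⟩,
    -⟨0, 0, 0, 1⟩}

/-- The orbit relation of the action of `Q₈` on `S³` by quaternion multiplication. -/
def q8Rel (a b : S3) : Prop := ∃ g ∈ Q8set, b.val = g * a.val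

/-! Conjugation `u ↦ ḡ u g` by a unit quaternion `g` is a rotation of the pure quaternions
`≅ ℝ³`, so `g ↦ (ḡ i g, ḡ j g)` maps `S³` onto `V₂(ℝ³)`. Replacing `g` by `h g` with
`h ∈ Q₈` changes the two vectors by the signs with which `h` (anti)commutes with `i` and
`j`; conversely, if `(ḡ i g, ḡ j g)` and `(b̄ i b, b̄ j b)` agree up to signs, then `b ḡ`
conjugates `i` and `j` to `±i` and `±j`, which forces `b ḡ ∈ Q₈`. So the frame map
descends to a continuous bijection `S³/Q₈ → V₂(ℝ³)/∼`, a homeomorphism because `S³` is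
compact and `(v₁, v₂) ↦ (v₁ v₁ᵀ, v₂ v₂ᵀ)` separates the classes of `∼`. -/

def quatI : ℍ[ℝ] := ⟨0, 1, 0, 0⟩
def quatJ : ℍ[ℝ] := ⟨0, 0, 1, 0⟩
def quatK : ℍ[ℝ] := ⟨0, 0, 0, 1⟩

lemma Q8set_eq : Q8set = {1, -1, quatI, -quatI, quatJ, -quatJ, quatK, -quatK} := rfl

@[simp] lemma star_quatI : star quatI = -quatI := Quaternion.star_eq_neg.2 rfl
@[simp] lemma star_quatJ : star quatJ = -quatJ := Quaternion.star_eq_neg.2 rfl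
@[simp] lemma star_quatK : star quatK = -quatK := Quaternion.star_eq_neg.2 rfl
@[simp] lemma quatI_mul_quatI : quatI * quatI = -1 := by ext <;> simp <;> simp [quatI]
@[simp] lemma quatJ_mul_quatJ : quatJ * quatJ = -1 := by ext <;> simp <;> simp [quatJ]
@[simp] lemma quatI_mul_quatJ : quatI * quatJ = quatK := by
  ext <;> simp <;> simp [quatI, quatJ, quatK]
@[simp] lemma quatJ_mul_quatI : quatJ * quatI = -quatK := by
  ext <;> simp <;> simp [quatI, quatJ, quatK]
@[simp] lemma quatJ_mul_quatK : quatJ * quatK = quatI := by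
  ext <;> simp <;> simp [quatI, quatJ, quatK]
@[simp] lemma quatK_mul_quatJ : quatK * quatJ = -quatI := by
  ext <;> simp <;> simp [quatI, quatJ, quatK]
@[simp] lemma quatK_mul_quatI : quatK * quatI = quatJ := by
  ext <;> simp <;> simp [quatI, quatJ, quatK]
@[simp] lemma quatI_mul_quatK : quatI * quatK = -quatJ := by
  ext <;> simp <;> simp [quatI, quatJ, quatK]

lemma eq_re_add_imI_smul_quatI (g : ℍ[ℝ]) :
    g = (g.re : ℍ[ℝ]) + g.imI • quatI + g.imJ • quatJ + g.imK • quatK := by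
  ext <;> simp <;> simp [quatI, quatJ, quatK]

section UnitQuaternion

variable {g a : ℍ[ℝ]}

lemma star_mul_self_of_norm_eq_one (hg : ‖g‖ = 1) : star g * g = 1 := by
  rw [Quaternion.star_mul_self, Quaternion.normSq_eq_norm_mul_self, hg, mul_one,
    Quaternion.coe_one]

lemma mul_star_self_of_norm_eq_one (hg : ‖g‖ = 1) : g * star g = 1 := by
  rw [Quaternion.self_mul_star, Quaternion.normSq_eq_norm_mul_self, hg, mul_one,
    Quaternion.coe_one]

lemma star_neg_mul_mul (g u : ℍ[ℝ]) : star (-g) * u * (-g) = star g * u * g := by simp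

lemma star_mul_mul_mul (g a u : ℍ[ℝ]) :
    star (g * a) * u * (g * a) = star a * (star g * u * g) * a := by
  rw [star_mul]; noncomm_ring

lemma mul_star_mul_mul_mul_star (ha : ‖a‖ = 1) (x : ℍ[ℝ]) :
    a * (star a * x * a) * star a = x := by
  calc a * (star a * x * a) * star a = a * star a * x * (a * star a) := by noncomm_ring
    _ = x := by rw [mul_star_self_of_norm_eq_one ha, one_mul, mul_one]

lemma star_mul_mul_eq_smul_of_star_mul_mul_mul {u : ℍ[ℝ]} (ha : ‖a‖ = 1) {ε : ℝ}
    (h : star (g * a) * u * (g * a) = ε • (star a * u * a)) : star g * u * g = ε • u := by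
  rw [← mul_star_mul_mul_mul_star ha (star g * u * g), ← star_mul_mul_mul, h, mul_smul_comm,
    smul_mul_assoc, mul_star_mul_mul_mul_star ha]

lemma re_star_mul_mul (g u : ℍ[ℝ]) : (star g * u * g).re = Quaternion.normSq g * u.re := by
  simp only [re_mul, imI_mul, imJ_mul, imK_mul, re_star, imI_star, imJ_star, imK_star,
    normSq_def']
  ring

lemma imI_star_mul_quatI_mul (g : ℍ[ℝ]) :
    (star g * quatI * g).imI = g.re ^ 2 + g.imI ^ 2 - g.imJ ^ 2 - g.imK ^ 2 := by
  simp only [imI_mul, re_mul, imJ_mul, imK_mul, re_star, imI_star, imJ_star, imK_star]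
  simp only [quatI]
  ring

lemma imJ_star_mul_quatJ_mul (g : ℍ[ℝ]) :
    (star g * quatJ * g).imJ = g.re ^ 2 - g.imI ^ 2 + g.imJ ^ 2 - g.imK ^ 2 := by
  simp only [imJ_mul, re_mul, imI_mul, imK_mul, re_star, imI_star, imJ_star, imK_star]
  simp only [quatJ]
  ring

end UnitQuaternion

def imVec (x : ℍ[ℝ]) : Fin 3 → ℝ := ![x.imI, x.imJ, x.imK]

def ofImVec (v : Fin 3 → ℝ) : ℍ[ℝ] := ⟨0, v 0, v 1, v 2⟩

lemma imVec_ofImVec (v : Fin 3 → ℝ) : imVec (ofImVec v) = v := by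
  ext i; fin_cases i <;> rfl

lemma ofImVec_imVec {x : ℍ[ℝ]} (hx : x.re = 0) : ofImVec (imVec x) = x := by
  ext <;> simp [ofImVec, imVec, hx]

lemma eq_of_imVec_eq {x y : ℍ[ℝ]} (hx : x.re = 0) (hy : y.re = 0) (h : imVec x = imVec y) :
    x = y := by
  rw [← ofImVec_imVec hx, ← ofImVec_imVec hy, h]

lemma imVec_smul (c : ℝ) (x : ℍ[ℝ]) : imVec (c • x) = c • imVec x := by
  ext i; fin_cases i <;> simp [imVec]

lemma continuous_imVec : Continuous imVec := by
  have := Quaternion.continuous_imI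
  have := Quaternion.continuous_imJ
  have := Quaternion.continuous_imK
  unfold imVec; fun_prop

lemma imVec_dotProduct_imVec (x y : ℍ[ℝ]) :
    imVec x ⬝ᵥ imVec y = x.re * y.re - (x * y).re := by
  simp only [dotProduct, imVec, Fin.sum_univ_three, cons_val_zero, cons_val_one, cons_val,
    re_mul]
  ring

lemma imVec_conj_dotProduct {g u v : ℍ[ℝ]} (hg : ‖g‖ = 1) (hu : u.re = 0) :
    imVec (star g * u * g) ⬝ᵥ imVec (star g * v * g) = -(u * v).re := by
  have hmul : star g * u * g * (star g * v * g) = star g * (u * v) * g := by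
    calc star g * u * g * (star g * v * g) = star g * u * (g * star g) * v * g := by
          noncomm_ring
      _ = _ := by rw [mul_star_self_of_norm_eq_one hg, mul_one, mul_assoc (star g) u v]
  rw [imVec_dotProduct_imVec, hmul, re_star_mul_mul, re_star_mul_mul, re_star_mul_mul, hu,
    Quaternion.normSq_eq_norm_mul_self, hg]
  ring

lemma ofImVec_mul_self {v : Fin 3 → ℝ} (hv : v ⬝ᵥ v = 1) : ofImVec v * ofImVec v = -1 := by
  simp only [dotProduct, Fin.sum_univ_three] at hv
  ext <;>
    simp [Quaternion.re_mul, Quaternion.imI_mul, Quaternion.imJ_mul, Quaternion.imK_mul] <;>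
    simp [ofImVec] <;> [linear_combination -hv; ring; ring; ring]

lemma ofImVec_mul_comm {v w : Fin 3 → ℝ} (hvw : v ⬝ᵥ w = 0) :
    ofImVec v * ofImVec w = -(ofImVec w * ofImVec v) := by
  simp only [dotProduct, Fin.sum_univ_three] at hvw
  ext <;>
    simp [Quaternion.re_mul, Quaternion.imI_mul, Quaternion.imJ_mul, Quaternion.imK_mul] <;>
    simp [ofImVec] <;> [linear_combination -2 * hvw; ring; ring; ring]

noncomputable def frameMap (g : S3) : V2R3 :=
  ⟨(imVec (star g.1 * quatI * g.1), imVec (star g.1 * quatJ * g.1)), by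
    refine ⟨?_, ?_, ?_⟩ <;> rw [imVec_conj_dotProduct g.2 (by simp [quatI, quatJ])] <;>
      simp [quatK]⟩

lemma continuous_frameMap : Continuous frameMap := by
  apply Continuous.subtype_mk
  have := continuous_imVec
  fun_prop

lemma exists_sign_conj_of_mem_Q8set {h : ℍ[ℝ]} (hh : h ∈ Q8set) :
    ∃ ε₁ ε₂ : ℝ, (ε₁ = 1 ∨ ε₁ = -1) ∧ (ε₂ = 1 ∨ ε₂ = -1) ∧
      star h * quatI * h = ε₁ • quatI ∧ star h * quatJ * h = ε₂ • quatJ := by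
  suffices ∀ x ∈ ({1, quatI, quatJ, quatK} : Set ℍ[ℝ]), ∃ ε₁ ε₂ : ℝ,
      (ε₁ = 1 ∨ ε₁ = -1) ∧ (ε₂ = 1 ∨ ε₂ = -1) ∧
        star x * quatI * x = ε₁ • quatI ∧ star x * quatJ * x = ε₂ • quatJ by
    simp only [Q8set_eq, Set.mem_insert_iff, Set.mem_singleton_iff] at hh
    rcases hh with rfl | rfl | rfl | rfl | rfl | rfl | rfl | rfl <;>
      simpa only [star_neg_mul_mul] using this _ (by simp)
  simp only [Set.mem_insert_iff, Set.mem_singleton_iff, forall_eq_or_imp, forall_eq]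
  refine ⟨⟨1, 1, ?_⟩, ⟨1, -1, ?_⟩, ⟨-1, 1, ?_⟩, ⟨-1, -1, ?_⟩⟩ <;> simp

lemma mem_Q8set_of_conj_sign {g : ℍ[ℝ]} (hg : ‖g‖ = 1) {ε₁ ε₂ : ℝ}
    (hε₁ : ε₁ = 1 ∨ ε₁ = -1) (hε₂ : ε₂ = 1 ∨ ε₂ = -1)
    (h₁ : star g * quatI * g = ε₁ • quatI)
    (h₂ : star g * quatJ * g = ε₂ • quatJ) : g ∈ Q8set := by
  have hn : g.re ^ 2 + g.imI ^ 2 + g.imJ ^ 2 + g.imK ^ 2 = 1 := by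
    rw [← Quaternion.normSq_def', Quaternion.normSq_eq_norm_mul_self, hg, one_mul]
  have e₁ : ε₁ = g.re ^ 2 + g.imI ^ 2 - g.imJ ^ 2 - g.imK ^ 2 := by
    rw [← imI_star_mul_quatI_mul, h₁, Quaternion.imI_smul, smul_eq_mul, quatI, mul_one]
  have e₂ : ε₂ = g.re ^ 2 - g.imI ^ 2 + g.imJ ^ 2 - g.imK ^ 2 := by
    rw [← imJ_star_mul_quatJ_mul, h₂, Quaternion.imJ_smul, smul_eq_mul, quatJ, mul_one]
  have sq0 : ∀ x : ℝ, x ^ 2 = 0 → x = 0 := fun x => pow_eq_zero_iff two_ne_zero |>.1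
  have := sq_nonneg g.re; have := sq_nonneg g.imI; have := sq_nonneg g.imJ
  have := sq_nonneg g.imK
  rw [eq_re_add_imI_smul_quatI g, Q8set_eq]
  -- `ε₁`, `ε₂` are diagonal entries of the rotation `u ↦ ḡ u g`; together with
  -- `‖g‖ = 1` each sign pattern kills three coordinates of `g`.
  rcases hε₁ with rfl | rfl <;> rcases hε₂ with rfl | rfl
  · have hI := sq0 g.imI (by linarith)
    have hJ := sq0 g.imJ (by linarith)
    have hK := sq0 g.imK (by linarith)
    rcases sq_eq_one_iff.1 (by linarith : g.re ^ 2 = 1) with h | h <;> simp [h, hI, hJ, hK]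
  · have hr := sq0 g.re (by linarith)
    have hJ := sq0 g.imJ (by linarith)
    have hK := sq0 g.imK (by linarith)
    rcases sq_eq_one_iff.1 (by linarith : g.imI ^ 2 = 1) with h | h <;> simp [h, hr, hJ, hK]
  · have hr := sq0 g.re (by linarith)
    have hI := sq0 g.imI (by linarith)
    have hK := sq0 g.imK (by linarith)
    rcases sq_eq_one_iff.1 (by linarith : g.imJ ^ 2 = 1) with h | h <;> simp [h, hr, hI, hK]
  · have hr := sq0 g.re (by linarith)
    have hI := sq0 g.imI (by linarith)
    have hJ := sq0 g.imJ (by linarith)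
    rcases sq_eq_one_iff.1 (by linarith : g.imK ^ 2 = 1) with h | h <;> simp [h, hr, hI, hJ]

lemma frameMap_signRel_of_q8Rel {a b : S3} (h : q8Rel a b) :
    signRel (frameMap a) (frameMap b) := by
  obtain ⟨g, hg, hb⟩ := h
  obtain ⟨ε₁, ε₂, hε₁, hε₂, h₁, h₂⟩ := exists_sign_conj_of_mem_Q8set hg
  refine ⟨ε₁, ε₂, hε₁, hε₂, ?_, ?_⟩ <;>
    simp only [frameMap, hb, star_mul_mul_mul, h₁, h₂, smul_mul_assoc, mul_smul_comm,
      imVec_smul]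

lemma q8Rel_of_frameMap_signRel {a b : S3} (h : signRel (frameMap a) (frameMap b)) :
    q8Rel a b := by
  obtain ⟨ε₁, ε₂, hε₁, hε₂, h₁, h₂⟩ := h
  have hb : b.1 = b.1 * star a.1 * a.1 := by
    rw [mul_assoc, star_mul_self_of_norm_eq_one a.2, mul_one]
  have hg : ‖b.1 * star a.1‖ = 1 := by rw [norm_mul, Quaternion.norm_star, a.2, b.2, one_mul]
  have conj_sign : ∀ {u : ℍ[ℝ]} {ε : ℝ}, u.re = 0 →
      imVec (star b.1 * u * b.1) = ε • imVec (star a.1 * u * a.1) →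
      star (b.1 * star a.1) * u * (b.1 * star a.1) = ε • u := by
    intro u ε hu h
    refine star_mul_mul_eq_smul_of_star_mul_mul_mul a.2 ?_
    rw [← hb]
    refine eq_of_imVec_eq ?_ ?_ (by rwa [imVec_smul])
    all_goals simp only [Quaternion.re_smul, re_star_mul_mul, hu, mul_zero, smul_zero]
  exact ⟨_, mem_Q8set_of_conj_sign hg hε₁ hε₂ (conj_sign rfl h₁) (conj_sign rfl h₂),
    hb⟩

/-- `∑ₘ fₘ x ēₘ` for the frames `f = (1, P, Q, PQ)` and `e = (1, I, J, IJ)`, reading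
`ēₘ = -eₘ` for `m ≠ 0`. -/
def intertwiner {R : Type*} [Ring R] (P Q I J x : R) : R :=
  x - P * x * I - Q * x * J - P * Q * x * (I * J)

section Intertwiner

variable {R : Type*} [Ring R] {P Q I J : R}

lemma mul_intertwiner_left (hP : P * P = -1) (hI : I * I = -1) (hIJ : J * I = -(I * J))
    (x : R) : P * intertwiner P Q I J x = intertwiner P Q I J x * I := by
  have hIJI : I * (J * I) = J := by rw [hIJ, mul_neg, ← mul_assoc, hI]; noncomm_ring
  calc P * intertwiner P Q I J x
      = P * x - (P * P) * x * I - P * Q * x * J - (P * P) * Q * x * (I * J) := by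
        simp only [intertwiner]; noncomm_ring
    _ = x * I - P * x * (I * I) - Q * x * (J * I) - P * Q * x * (I * (J * I)) := by
        rw [hIJI, hP, hI, hIJ]; noncomm_ring
    _ = intertwiner P Q I J x * I := by simp only [intertwiner]; noncomm_ring

lemma mul_intertwiner_right (hQ : Q * Q = -1) (hPQ : Q * P = -(P * Q)) (hJ : J * J = -1)
    (x : R) : Q * intertwiner P Q I J x = intertwiner P Q I J x * J := by
  have hQPQ : Q * P * Q = P := by rw [hPQ, neg_mul, mul_assoc, hQ]; noncomm_ring
  calc Q * intertwiner P Q I J x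
      = Q * x - (Q * P) * x * I - (Q * Q) * x * J - (Q * P) * Q * x * (I * J) := by
        simp only [intertwiner]; noncomm_ring
    _ = x * J - P * x * (I * J) - Q * x * (J * J) - P * Q * x * (I * (J * J)) := by
        rw [hQPQ, hPQ, hQ, hJ]; noncomm_ring
    _ = intertwiner P Q I J x * J := by simp only [intertwiner]; noncomm_ring

end Intertwiner

lemma exists_intertwiner_ne_zero (P Q : ℍ[ℝ]) :
    ∃ x : ℍ[ℝ], intertwiner P Q quatI quatJ x ≠ 0 := by
  by_contra! h
  -- `∑ₑ re (ē · A e)` over the basis `e = 1, i, j, k` is the trace of `A`, which is `4`.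
  have htrace : (intertwiner P Q quatI quatJ 1).re
      - (quatI * intertwiner P Q quatI quatJ quatI).re
      - (quatJ * intertwiner P Q quatI quatJ quatJ).re
      - (quatK * intertwiner P Q quatI quatJ quatK).re = 4 := by
    simp [intertwiner, Quaternion.re_mul, Quaternion.imI_mul, Quaternion.imJ_mul,
      Quaternion.imK_mul]
    simp [quatI, quatJ, quatK]
    ring
  simp [h] at htrace

lemma star_mul_mul_of_mul_eq_mul {A u v : ℍ[ℝ]} (hA : A ≠ 0) (h : v * A = A * u) :
    star (‖A‖⁻¹ • star A) * u * (‖A‖⁻¹ • star A) = v := by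
  calc star (‖A‖⁻¹ • star A) * u * (‖A‖⁻¹ • star A)
      = (‖A‖⁻¹ * ‖A‖⁻¹) • (A * u * star A) := by
        simp only [Quaternion.star_smul, star_star, smul_mul_assoc, mul_smul_comm, smul_smul]
    _ = (‖A‖⁻¹ * ‖A‖⁻¹) • (v * (A * star A)) := by rw [← h, mul_assoc]
    _ = v := by
        rw [Quaternion.self_mul_star, Quaternion.normSq_eq_norm_mul_self,
          Quaternion.mul_coe_eq_smul, smul_smul]
        field_simp
        simp

lemma norm_inv_smul_star {A : ℍ[ℝ]} (hA : A ≠ 0) : ‖‖A‖⁻¹ • star A‖ = 1 := by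
  rw [norm_smul, Quaternion.norm_star, norm_inv, norm_norm,
    inv_mul_cancel₀ (norm_ne_zero_iff.2 hA)]

lemma frameMap_surjective : Function.Surjective frameMap := by
  rintro ⟨⟨p, q⟩, hp, hq, hpq⟩
  obtain ⟨x, hA⟩ := exists_intertwiner_ne_zero (ofImVec p) (ofImVec q)
  refine ⟨⟨_, norm_inv_smul_star hA⟩, Subtype.ext ?_⟩
  simp only [frameMap]
  rw [star_mul_mul_of_mul_eq_mul hA (mul_intertwiner_left (ofImVec_mul_self hp)
      quatI_mul_quatI (by simp) x),
    star_mul_mul_of_mul_eq_mul hA (mul_intertwiner_right (ofImVec_mul_self hq)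
      (ofImVec_mul_comm (dotProduct_comm p q ▸ hpq)) quatJ_mul_quatJ x),
    imVec_ofImVec, imVec_ofImVec]

lemma eq_or_eq_neg_of_vecMulVec_eq {ι K : Type*} [CommRing K] [IsDomain K] {u w : ι → K}
    (hu : u ≠ 0) (h : vecMulVec w w = vecMulVec u u) : w = u ∨ w = -u := by
  obtain ⟨i, hi⟩ := Function.ne_iff.1 hu
  have hij : ∀ j, w i * w j = u i * u j := fun j => by
    simpa [vecMulVec_apply] using congrFun (congrFun h i) j
  rcases mul_self_eq_mul_self_iff.1 (hij i) with hwi | hwi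
  · exact .inl <| funext fun j => mul_left_cancel₀ hi (by rw [← hij, hwi])
  · exact .inr <| funext fun j => mul_left_cancel₀ hi (by
      rw [Pi.neg_apply, mul_neg, ← hij, hwi, neg_mul, neg_neg])

lemma exists_sign_of_vecMulVec_eq {u w : Fin 3 → ℝ} (hu : u ⬝ᵥ u = 1)
    (h : vecMulVec u u = vecMulVec w w) : ∃ ε : ℝ, (ε = 1 ∨ ε = -1) ∧ w = ε • u := by
  have hu0 : u ≠ 0 := by rintro rfl; simp at hu
  rcases eq_or_eq_neg_of_vecMulVec_eq hu0 h.symm with rfl | rfl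
  exacts [⟨1, .inl rfl, (one_smul _ _).symm⟩, ⟨-1, .inr rfl, (neg_one_smul _ _).symm⟩]

def outerSquares (p : V2R3) : Matrix (Fin 3) (Fin 3) ℝ × Matrix (Fin 3) (Fin 3) ℝ :=
  (vecMulVec p.1.1 p.1.1, vecMulVec p.1.2 p.1.2)

lemma continuous_outerSquares : Continuous outerSquares := by
  have h₁ : Continuous fun p : V2R3 => p.1.1 := continuous_fst.comp continuous_subtype_val
  have h₂ : Continuous fun p : V2R3 => p.1.2 := continuous_snd.comp continuous_subtype_val
  exact (h₁.matrix_vecMulVec h₁).prodMk (h₂.matrix_vecMulVec h₂)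

lemma signRel_iff_outerSquares_eq {p q : V2R3} :
    signRel p q ↔ outerSquares p = outerSquares q := by
  constructor
  · rintro ⟨ε₁, ε₂, hε₁, hε₂, h₁, h₂⟩
    rcases hε₁ with rfl | rfl <;> rcases hε₂ with rfl | rfl <;>
      simp [outerSquares, h₁, h₂]
  · intro h
    obtain ⟨ε₁, hε₁, h₁⟩ := exists_sign_of_vecMulVec_eq p.2.1 (Prod.ext_iff.1 h).1
    obtain ⟨ε₂, hε₂, h₂⟩ := exists_sign_of_vecMulVec_eq p.2.2.1 (Prod.ext_iff.1 h).2
    exact ⟨ε₁, ε₂, hε₁, hε₂, h₁, h₂⟩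

lemma signRel_of_quot_mk_eq {p q : V2R3} (h : Quot.mk signRel p = Quot.mk signRel q) :
    signRel p q :=
  signRel_iff_outerSquares_eq.2
    (congrArg (Quot.lift outerSquares fun _ _ => signRel_iff_outerSquares_eq.1) h)

instance : T2Space (Quot signRel) :=
  T2Space.of_injective_continuous
    (f := Quot.lift outerSquares fun _ _ => signRel_iff_outerSquares_eq.1)
    (by rintro ⟨p⟩ ⟨q⟩ h; exact Quot.sound (signRel_iff_outerSquares_eq.2 h))
    (continuous_quot_lift _ continuous_outerSquares)

instance : CompactSpace S3 :=
  have : IsCompact {q : ℍ[ℝ] | ‖q‖ = 1} := by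
    simpa [Metric.sphere] using isCompact_sphere (0 : ℍ[ℝ]) 1
  isCompact_iff_compactSpace.1 this

/-- The quotient of the Stiefel manifold `V₂(ℝ³)` by `(v₁, v₂) ∼ (ε₁ v₁, ε₂ v₂)`,
`ε₁, ε₂ = ±1`, is homeomorphic to the orbit space `S³/Q₈`. -/
theorem V2_quotient_homeomorph_S3_mod_Q8 :
    Nonempty (Quot signRel ≃ₜ Quot q8Rel) := by
  let Φ : Quot q8Rel → Quot signRel :=
    Quot.lift (Quot.mk _ ∘ frameMap) fun _ _ h => Quot.sound (frameMap_signRel_of_q8Rel h)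
  have hΦ : Function.Bijective Φ := by
    refine ⟨?_, ?_⟩
    · rintro ⟨a⟩ ⟨b⟩ h
      exact Quot.sound (q8Rel_of_frameMap_signRel (signRel_of_quot_mk_eq h))
    · rintro ⟨v⟩
      obtain ⟨a, rfl⟩ := frameMap_surjective v
      exact ⟨Quot.mk _ a, rfl⟩
  have hΦc : Continuous Φ :=
    continuous_quot_lift _ (continuous_quot_mk.comp continuous_frameMap)
  exact ⟨(hΦc.homeoOfEquivCompactToT2 (f := Equiv.ofBijective Φ hΦ)).symm⟩
end

section
/- Let n ≥ 2 and let ω : [0,1] → Mₙ⁻(SO(3)) be a continuous path, ω(t) = (B₁(t),…,Bₙ(t)). Then for all t ∈ [0,1]: (i) if Bᵢ(0) = id then Bᵢ(t) = id; (ii) if Bᵢ(0) = Bⱼ(0) then Bᵢ(t) = Bⱼ(t); (iii) if Bᵢ(0) and Bⱼ(0) are distinct involutions then Bᵢ(t) and Bⱼ(t) are distinct involutions; (iv) if B_k(0) = Bᵢ(0)Bⱼ(0) then B_k(t) = Bᵢ(t)Bⱼ(t). -/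
/-- `Mₙ⁻(SO(3))`: the complement of the connected component of the identity `n`-tuple in
`Hom(ℤⁿ, SO(3))`. -/
def MMinus (n : ℕ) : Set (CommTuples n SO3) := (connectedComponent (oneTuple n SO3))ᶜ

/-- The `i`-th coordinate `Bᵢ(t)` of a path `ω` in `Mₙ⁻(SO(3))`. -/
def coordAt {n : ℕ} (ω : C(unitInterval, ↥(MMinus n))) (i : Fin n)
    (t : unitInterval) : SO3 :=
  ((ω t : CommTuples n SO3)).val i

/-!
A commuting tuple in `SO(3)` with an entry `A` that is not an involution lies in the circle of
rotations about the axis of `A` (the centraliser of `A`), and turning all rotation angles down to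
zero joins it to the identity tuple. So along a path in `Mₙ⁻(SO(3))` all entries, hence all
products of entries, are involutions. Since `1` is isolated among the involutions of a normed
algebra (`‖x - 1‖ ≥ 2` when `x² = 1 ≠ x`), whether such a product equals `1` cannot change along
the path, and each of (i)–(iv) is a statement of this kind.
-/

open Filter Topology Matrix

lemma two_le_norm_sub_one_of_sq_eq_one {R : Type*} [NormedRing R] [NormedAlgebra ℝ R] {x : R}
    (hx : x ^ 2 = 1) (hx1 : x ≠ 1) : 2 ≤ ‖x - 1‖ := by
  have hsq : (x - 1) * (x - 1) = (-2 : ℝ) • (x - 1) := by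
    rw [sub_mul, mul_sub, mul_sub, ← sq, hx, mul_one, one_mul, mul_one]
    module
  have hle : 2 * ‖x - 1‖ ≤ ‖x - 1‖ * ‖x - 1‖ := by
    simpa [hsq, norm_smul] using norm_mul_le (x - 1) (x - 1)
  exact le_of_mul_le_mul_right hle (norm_pos_iff.mpr (sub_ne_zero.mpr hx1))

lemma eventually_nhdsWithin_sq_eq_one {R : Type*} [NormedRing R] [NormedAlgebra ℝ R] :
    ∀ᶠ x in 𝓝[{x : R | x ^ 2 = 1}] 1, x = 1 := by
  refine eventually_nhdsWithin_iff.mpr <| mem_of_superset (Metric.ball_mem_nhds 1 two_pos) ?_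
  intro x hx hsq
  by_contra hx1
  exact (two_le_norm_sub_one_of_sq_eq_one hsq hx1).not_gt (by simpa [dist_eq_norm] using hx)

lemma apply_eq_iff_of_eventually_nhdsWithin {T X : Type*} [TopologicalSpace T]
    [PreconnectedSpace T] [TopologicalSpace X] [T1Space X] {g : T → X} (hg : Continuous g)
    {S : Set X} (hS : ∀ s, g s ∈ S) {a : X} (ha : ∀ᶠ x in 𝓝[S] a, x = a) (t₀ t : T) :
    g t₀ = a ↔ g t = a := by
  have hclopen : IsClopen {s | g s = a} := by
    refine ⟨isClosed_singleton.preimage hg, isOpen_iff_mem_nhds.mpr fun s hs => ?_⟩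
    have ha' : ∀ᶠ x in 𝓝 (g s), x ∈ S → x = a := by
      rw [show g s = a from hs]
      exact eventually_nhdsWithin_iff.mp ha
    exact (hg.continuousAt.eventually ha').mono fun r hr => hr (hS r)
  have hconst (t₁ t₂ : T) (h : g t₁ = a) : g t₂ = a :=
    (hclopen.eq_univ ⟨t₁, h⟩ ▸ Set.mem_univ t₂ : t₂ ∈ {s | g s = a})
  exact ⟨hconst t₀ t, hconst t t₀⟩

lemma eq_iff_mul_eq_one_of_sq_eq_one {G : Type*} [Group G] {x y : G} (hy : y ^ 2 = 1) :
    x = y ↔ x * y = 1 := by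
  rw [mul_eq_one_iff_eq_inv, inv_eq_of_mul_eq_one_right (by rwa [← sq])]

lemma SO3.coe_inv (A : SO3) : ((A⁻¹ : SO3) : Matrix (Fin 3) (Fin 3) ℝ) = (A : Matrix _ _ ℝ)ᵀ := by
  rw [← star_eq_inv, specialUnitaryGroup.coe_star, star_eq_conjTranspose,
    conjTranspose_eq_transpose_of_trivial]

lemma SO3.eventually_nhdsWithin_sq_eq_one : ∀ᶠ x in 𝓝[{x : SO3 | x ^ 2 = 1}] 1, x = 1 := by
  -- any algebra norm on matrices induces their product topology
  let _ := Matrix.linftyOpNormedRing (n := Fin 3) (α := ℝ)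
  let _ := Matrix.linftyOpNormedAlgebra (R := ℝ) (n := Fin 3) (α := ℝ)
  have hmaps : Set.MapsTo ((↑) : SO3 → Matrix (Fin 3) (Fin 3) ℝ) {x | x ^ 2 = 1} {x | x ^ 2 = 1} :=
    fun x hx => by simpa using congrArg Subtype.val hx
  have hval := continuous_subtype_val.continuousWithinAt.tendsto_nhdsWithin hmaps (x := 1)
  exact (hval.eventually _root_.eventually_nhdsWithin_sq_eq_one).mono fun x hx => Subtype.ext hx

lemma SO3.apply_eq_apply_iff_of_sq_eq_one {T : Type*} [TopologicalSpace T] [PreconnectedSpace T]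
    {x y : T → SO3} (hx : Continuous x) (hy : Continuous y) (hx2 : ∀ s, x s ^ 2 = 1)
    (hy2 : ∀ s, y s ^ 2 = 1) (hxy : ∀ s, Commute (x s) (y s)) (t₀ t : T) :
    x t₀ = y t₀ ↔ x t = y t := by
  simp only [eq_iff_mul_eq_one_of_sq_eq_one (hy2 _)]
  refine apply_eq_iff_of_eventually_nhdsWithin (hx.mul hy) (fun s => ?_)
    SO3.eventually_nhdsWithin_sq_eq_one t₀ t
  show (x s * y s) ^ 2 = 1
  rw [(hxy s).mul_pow, hx2, hy2, one_mul]

lemma exists_cos_sin_eq {a b : ℝ} (h : a ^ 2 + b ^ 2 = 1) :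
    ∃ θ : ℝ, Real.cos θ = a ∧ Real.sin θ = b := by
  have hz : ‖(⟨a, b⟩ : ℂ)‖ = 1 := by simp [Complex.norm_eq_sqrt_sq_add_sq, h]
  have hz0 : (⟨a, b⟩ : ℂ) ≠ 0 := fun h0 => by simp [h0] at hz
  exact ⟨Complex.arg ⟨a, b⟩, by simp [Complex.cos_arg hz0, hz], by simp [Complex.sin_arg, hz]⟩

lemma exists_smul_dotProduct_self_eq_one_s18 {ι : Type*} [Fintype ι] {v : ι → ℝ} (hv : v ≠ 0) :
    ∃ c : ℝ, (c • v) ⬝ᵥ (c • v) = 1 := by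
  have hpos : 0 < v ⬝ᵥ v :=
    lt_of_le_of_ne (by simpa using dotProduct_star_self_nonneg v)
      (Ne.symm (mt dotProduct_self_eq_zero.mp hv))
  refine ⟨(√(v ⬝ᵥ v))⁻¹, ?_⟩
  rw [smul_dotProduct, dotProduct_smul, smul_eq_mul, smul_eq_mul, ← mul_assoc, ← mul_inv,
    Real.mul_self_sqrt hpos.le, inv_mul_cancel₀ hpos.ne']

lemma exists_dotProduct_self_eq_one_dotProduct_eq_zero (k : Fin 3 → ℝ) :
    ∃ w : Fin 3 → ℝ, w ⬝ᵥ w = 1 ∧ k ⬝ᵥ w = 0 := by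
  obtain ⟨w, hw0, hkw⟩ : ∃ w : Fin 3 → ℝ, w ≠ 0 ∧ k ⬝ᵥ w = 0 := by
    by_cases h : k 0 = 0 ∧ k 1 = 0
    · exact ⟨![1, 0, 0], by simp, by simp [vecHead, h.1]⟩
    · refine ⟨![-k 1, k 0, 0], fun h0 => h ?_, by simp [vecHead, vecTail]; ring⟩
      simpa using And.intro (congrFun h0 1) (congrFun h0 0)
  obtain ⟨c, hc⟩ := exists_smul_dotProduct_self_eq_one_s18 hw0
  exact ⟨c • w, hc, by rw [dotProduct_smul, hkw, smul_zero]⟩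

section Orthonormal

variable {ι R : Type*} [Fintype ι] [DecidableEq ι] [CommRing R] {v : ι → ι → R}
  (hv : ∀ i j, v i ⬝ᵥ v j = if i = j then 1 else 0)
include hv

lemma eq_zero_of_forall_dotProduct_eq_zero_of_orthonormal {y : ι → R}
    (hy : ∀ i, v i ⬝ᵥ y = 0) : y = 0 := by
  have hH : of v * (of v)ᵀ = 1 := by
    ext i j
    exact (hv i j).trans one_apply.symm
  have hvy : of v *ᵥ y = 0 := funext hy
  rw [← one_mulVec y, ← mul_eq_one_comm.mp hH, ← mulVec_mulVec, hvy, mulVec_zero]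

lemma eq_zero_of_forall_mulVec_eq_zero_of_orthonormal {D : Matrix ι ι R}
    (hD : ∀ i, D *ᵥ v i = 0) : D = 0 := by
  refine funext fun j => eq_zero_of_forall_dotProduct_eq_zero_of_orthonormal hv fun i => ?_
  rw [dotProduct_comm]
  exact congrFun (hD i) j

end Orthonormal

def crossMatrix (v : Fin 3 → ℝ) : Matrix (Fin 3) (Fin 3) ℝ :=
  !![0, -v 2, v 1; v 2, 0, -v 0; -v 1, v 0, 0]

lemma crossMatrix_mulVec (v w : Fin 3 → ℝ) : crossMatrix v *ᵥ w = v ⨯₃ w := by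
  ext i
  fin_cases i <;> simp [crossMatrix, cross_apply, mulVec, vecHead, vecTail] <;> ring

lemma crossMatrix_smul (c : ℝ) (v : Fin 3 → ℝ) : crossMatrix (c • v) = c • crossMatrix v := by
  ext i j
  fin_cases i <;> fin_cases j <;> simp [crossMatrix]

lemma crossMatrix_transpose (v : Fin 3 → ℝ) : (crossMatrix v)ᵀ = -crossMatrix v := by
  ext i j
  fin_cases i <;> fin_cases j <;> simp [crossMatrix]

lemma exists_crossMatrix_eq_of_transpose_eq_neg {S : Matrix (Fin 3) (Fin 3) ℝ} (hS : Sᵀ = -S) :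
    ∃ v, crossMatrix v = S := by
  have h i j : S j i = -S i j := congrFun (congrFun hS i) j
  refine ⟨![S 2 1, S 0 2, S 1 0], ?_⟩
  ext i j
  fin_cases i <;> fin_cases j <;> simp [crossMatrix] <;>
    linarith [h 0 0, h 1 1, h 2 2, h 0 1, h 0 2, h 1 2]

lemma crossMatrix_mul_vecMulVec_self (k : Fin 3 → ℝ) : crossMatrix k * vecMulVec k k = 0 := by
  rw [mul_vecMulVec, crossMatrix_mulVec, cross_self]
  ext
  simp [vecMulVec_apply]

lemma vecMulVec_self_mul_crossMatrix (k : Fin 3 → ℝ) : vecMulVec k k * crossMatrix k = 0 := by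
  rw [← transpose_transpose (vecMulVec k k * _), transpose_mul, crossMatrix_transpose,
    transpose_vecMulVec, neg_mul, crossMatrix_mul_vecMulVec_self, neg_zero, transpose_zero]

/-- For a unit vector `k`, `vecMulVec k k` is the projection onto `ℝ k`, and with `e = 1`,
`(a, b) = (cos θ, sin θ)` this is Rodrigues' formula for the rotation by `θ` about `k`. -/
def axialMatrix (k : Fin 3 → ℝ) (e a b : ℝ) : Matrix (Fin 3) (Fin 3) ℝ :=
  e • vecMulVec k k + a • (1 - vecMulVec k k) + b • crossMatrix k

lemma axialMatrix_transpose (k : Fin 3 → ℝ) (e a b : ℝ) :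
    (axialMatrix k e a b)ᵀ = axialMatrix k e a (-b) := by
  simp only [axialMatrix, transpose_add, transpose_smul, transpose_sub, transpose_one,
    transpose_vecMulVec, crossMatrix_transpose]
  module

lemma axialMatrix_one_one_zero (k : Fin 3 → ℝ) : axialMatrix k 1 1 0 = 1 := by
  simp [axialMatrix]

lemma crossMatrix_eq_axialMatrix (k : Fin 3 → ℝ) : crossMatrix k = axialMatrix k 0 0 1 := by
  simp [axialMatrix]

lemma axialMatrix_mulVec_of_dotProduct_eq_zero {k w : Fin 3 → ℝ} (hkw : k ⬝ᵥ w = 0)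
    (e a b : ℝ) : axialMatrix k e a b *ᵥ w = a • w + b • k ⨯₃ w := by
  simp [axialMatrix, add_mulVec, sub_mulVec, smul_mulVec, vecMulVec_mulVec, hkw,
    crossMatrix_mulVec]

section UnitAxis

variable {k : Fin 3 → ℝ} (hk : k ⬝ᵥ k = 1)
include hk

lemma vecMulVec_self_mul_self : vecMulVec k k * vecMulVec k k = vecMulVec k k := by
  rw [vecMulVec_mul_vecMulVec, hk, one_smul]

lemma crossMatrix_mul_self : crossMatrix k * crossMatrix k = vecMulVec k k - 1 := by
  refine ext_iff_mulVec.mpr fun y => ?_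
  rw [← mulVec_mulVec, crossMatrix_mulVec, crossMatrix_mulVec, cross_cross_eq_smul_sub_smul',
    hk, sub_mulVec, vecMulVec_mulVec, one_mulVec, one_smul, op_smul_eq_smul]

lemma axialMatrix_mul (e a b e' a' b' : ℝ) :
    axialMatrix k e a b * axialMatrix k e' a' b' =
      axialMatrix k (e * e') (a * a' - b * b') (a * b' + b * a') := by
  simp only [axialMatrix, mul_add, add_mul, smul_mul_assoc, mul_smul_comm, sub_mul,
    mul_sub, one_mul, mul_one, vecMulVec_self_mul_self hk, crossMatrix_mul_self hk,
    crossMatrix_mul_vecMulVec_self, vecMulVec_self_mul_crossMatrix]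
  module

lemma axialMatrix_commute (e a b e' a' b' : ℝ) :
    Commute (axialMatrix k e a b) (axialMatrix k e' a' b') := by
  rw [Commute, SemiconjBy, axialMatrix_mul hk, axialMatrix_mul hk]
  congr 1 <;> ring

lemma det_axialMatrix (e a b : ℝ) : (axialMatrix k e a b).det = e * (a ^ 2 + b ^ 2) := by
  rw [vec3_dotProduct] at hk
  simp [axialMatrix, det_fin_three, crossMatrix, vecMulVec_apply, one_apply]
  linear_combination
    ((e - a) * b ^ 2 * (k 0 * k 0 + k 1 * k 1 + k 2 * k 2) + e * (a ^ 2 + b ^ 2) - a ^ 3) * hk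

lemma axialMatrix_mulVec_self (e a b : ℝ) : axialMatrix k e a b *ᵥ k = e • k := by
  simp [axialMatrix, add_mulVec, sub_mulVec, smul_mulVec, vecMulVec_mulVec, hk,
    crossMatrix_mulVec, cross_self]

lemma mulVec_self_eq_smul_of_commute {B : Matrix (Fin 3) (Fin 3) ℝ}
    (hB : Commute B (vecMulVec k k)) : B *ᵥ k = (k ⬝ᵥ B *ᵥ k) • k := by
  calc B *ᵥ k = vecMulVec k k *ᵥ (B *ᵥ k) := by
        rw [mulVec_mulVec, ← hB.eq, ← mulVec_mulVec, vecMulVec_mulVec, hk, MulOpposite.op_one,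
          one_smul]
    _ = (k ⬝ᵥ B *ᵥ k) • k := by rw [vecMulVec_mulVec, op_smul_eq_smul]

lemma dotProduct_mulVec_eq_zero_of_commute {B : Matrix (Fin 3) (Fin 3) ℝ}
    (hB : Commute B (vecMulVec k k)) {w : Fin 3 → ℝ} (hkw : k ⬝ᵥ w = 0) :
    k ⬝ᵥ B *ᵥ w = 0 := by
  have h : vecMulVec k k *ᵥ (B *ᵥ w) = 0 := by
    rw [mulVec_mulVec, ← hB.eq, ← mulVec_mulVec, vecMulVec_mulVec, hkw, MulOpposite.op_zero,
      zero_smul, mulVec_zero]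
  have hk' := congrArg (dotProduct k) h
  rwa [vecMulVec_mulVec, op_smul_eq_smul, dotProduct_smul, hk, smul_eq_mul, mul_one,
    dotProduct_zero] at hk'

lemma orthonormal_cross_frame {w : Fin 3 → ℝ} (hw : w ⬝ᵥ w = 1) (hkw : k ⬝ᵥ w = 0)
    (i j : Fin 3) : ![k, w, k ⨯₃ w] i ⬝ᵥ ![k, w, k ⨯₃ w] j = if i = j then 1 else 0 := by
  have hwk : w ⬝ᵥ k = 0 := by rw [dotProduct_comm, hkw]
  have hck : k ⨯₃ w ⬝ᵥ k = 0 := by rw [dotProduct_comm, dot_self_cross]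
  have hcw : k ⨯₃ w ⬝ᵥ w = 0 := by rw [dotProduct_comm, dot_cross_self]
  fin_cases i <;> fin_cases j <;>
    simp [hk, hw, hkw, hwk, hck, hcw, dot_self_cross, dot_cross_self, cross_dot_cross]

lemma exists_eq_axialMatrix_of_commute {B : Matrix (Fin 3) (Fin 3) ℝ}
    (hB : Commute B (crossMatrix k)) : ∃ e a b, B = axialMatrix k e a b := by
  obtain ⟨w, hw, hkw⟩ := exists_dotProduct_self_eq_one_dotProduct_eq_zero k
  have hframe := orthonormal_cross_frame hk hw hkw
  have hBP : Commute B (vecMulVec k k) := by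
    simpa [crossMatrix_mul_self hk] using (hB.mul_right hB).add_right (Commute.one_right B)
  set e := k ⬝ᵥ B *ᵥ k
  set a := w ⬝ᵥ B *ᵥ w
  set b := k ⨯₃ w ⬝ᵥ B *ᵥ w
  refine ⟨e, a, b, sub_eq_zero.mp ?_⟩
  -- `D` kills the frame `k, w, k ⨯₃ w`; the last since `D` commutes with `crossMatrix k`
  set D := B - axialMatrix k e a b
  have hDK : Commute D (crossMatrix k) :=
    hB.sub_left (crossMatrix_eq_axialMatrix k ▸ axialMatrix_commute hk _ _ _ _ _ _)
  have hDk : D *ᵥ k = 0 := by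
    rw [sub_mulVec, mulVec_self_eq_smul_of_commute hk hBP, axialMatrix_mulVec_self hk, sub_self]
  have hDw : D *ᵥ w = 0 := by
    have hkBw := dotProduct_mulVec_eq_zero_of_commute hk hBP hkw
    have huw : k ⨯₃ w ⬝ᵥ w = 0 := by simpa using hframe 2 1
    have huu : k ⨯₃ w ⬝ᵥ k ⨯₃ w = 1 := by simpa using hframe 2 2
    refine eq_zero_of_forall_dotProduct_eq_zero_of_orthonormal hframe fun i => ?_
    fin_cases i <;>
      simp [D, a, b, sub_mulVec, axialMatrix_mulVec_of_dotProduct_eq_zero hkw, hkBw, hkw, hw,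
        huw, huu]
  refine eq_zero_of_forall_mulVec_eq_zero_of_orthonormal hframe fun i => ?_
  fin_cases i
  · exact hDk
  · exact hDw
  · show D *ᵥ (k ⨯₃ w) = 0
    rw [← crossMatrix_mulVec, mulVec_mulVec, hDK.eq, ← mulVec_mulVec, hDw, mulVec_zero]

lemma axialMatrix_mem_specialOrthogonalGroup_iff {e a b : ℝ} :
    axialMatrix k e a b ∈ specialOrthogonalGroup (Fin 3) ℝ ↔ e = 1 ∧ a ^ 2 + b ^ 2 = 1 := by
  have hmul : axialMatrix k e a b * (axialMatrix k e a b)ᵀ =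
      axialMatrix k (e * e) (a ^ 2 + b ^ 2) 0 := by
    rw [axialMatrix_transpose, axialMatrix_mul hk]
    congr 1 <;> ring
  rw [mem_specialOrthogonalGroup_iff, mem_orthogonalGroup_iff, hmul, det_axialMatrix hk]
  constructor
  · rintro ⟨horth, hdet⟩
    obtain ⟨w, hw, hkw⟩ := exists_dotProduct_self_eq_one_dotProduct_eq_zero k
    have hab := congrArg (fun M => w ⬝ᵥ M *ᵥ w) horth
    simp only [axialMatrix_mulVec_of_dotProduct_eq_zero hkw, one_mulVec, dotProduct_add,
      dotProduct_smul, hw, dot_cross_self, smul_eq_mul, mul_one, mul_zero, add_zero] at hab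
    exact ⟨by simpa [hab] using hdet, hab⟩
  · rintro ⟨rfl, hab⟩
    simp [hab, axialMatrix_one_one_zero]

lemma exists_eq_axialMatrix_cos_sin_of_commute {B : SO3}
    (hB : Commute (B : Matrix (Fin 3) (Fin 3) ℝ) (crossMatrix k)) :
    ∃ θ : ℝ, (B : Matrix (Fin 3) (Fin 3) ℝ) = axialMatrix k 1 (Real.cos θ) (Real.sin θ) := by
  obtain ⟨e, a, b, hB⟩ := exists_eq_axialMatrix_of_commute hk hB
  obtain ⟨rfl, hab⟩ := (axialMatrix_mem_specialOrthogonalGroup_iff hk).mp (hB ▸ B.2)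
  obtain ⟨θ, rfl, rfl⟩ := exists_cos_sin_eq hab
  exact ⟨θ, hB⟩

end UnitAxis

section AxialTuple

variable {n : ℕ} {k : Fin 3 → ℝ} (hk : k ⬝ᵥ k = 1)

noncomputable def axialTuple (θ : Fin n → ℝ) : CommTuples n SO3 :=
  ⟨fun j => ⟨axialMatrix k 1 (Real.cos (θ j)) (Real.sin (θ j)),
      (axialMatrix_mem_specialOrthogonalGroup_iff hk).2 ⟨rfl, Real.cos_sq_add_sin_sq _⟩⟩,
    fun _ _ => Subtype.ext (axialMatrix_commute hk _ _ _ _ _ _).eq⟩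

lemma continuous_axialTuple : Continuous (axialTuple (n := n) hk) := by
  refine Continuous.subtype_mk (continuous_pi fun j => Continuous.subtype_mk ?_ _) _
  unfold axialMatrix
  fun_prop

lemma axialTuple_zero : axialTuple hk 0 = oneTuple n SO3 := by
  refine Subtype.ext (funext fun j => Subtype.ext ?_)
  simp [axialTuple, oneTuple, axialMatrix_one_one_zero]

lemma axialTuple_mem_connectedComponent (θ : Fin n → ℝ) :
    axialTuple hk θ ∈ connectedComponent (oneTuple n SO3) := by
  rw [← axialTuple_zero hk]
  exact (continuous_axialTuple hk).image_connectedComponent_subset 0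
    ⟨θ, by simp [PreconnectedSpace.connectedComponent_eq_univ], rfl⟩

end AxialTuple

lemma mem_connectedComponent_oneTuple_of_sq_ne_one {n : ℕ} (f : CommTuples n SO3) {i : Fin n}
    (hi : f.1 i ^ 2 ≠ 1) : f ∈ connectedComponent (oneTuple n SO3) := by
  -- the axis of `A` is read off `A - Aᵀ`, and `Aᵀ = A⁻¹` commutes with every entry
  set A : Matrix (Fin 3) (Fin 3) ℝ := (f.1 i).1
  have hS : A - Aᵀ ≠ 0 := by
    rw [sub_ne_zero, ← SO3.coe_inv, Ne, Subtype.coe_inj, ← mul_eq_one_iff_eq_inv, ← sq]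
    exact hi
  obtain ⟨v, hv⟩ := exists_crossMatrix_eq_of_transpose_eq_neg (S := A - Aᵀ) (by simp)
  have hv0 : v ≠ 0 := by
    rintro rfl
    refine hS (hv ▸ ?_)
    ext i j
    fin_cases i <;> fin_cases j <;> simp [crossMatrix]
  obtain ⟨c, hk⟩ := exists_smul_dotProduct_self_eq_one_s18 hv0
  have hcomm j : Commute (f.1 j).1 (crossMatrix (c • v)) := by
    have hfA : Commute (f.1 j) (f.1 i) := f.2 j i
    have hA : Commute (f.1 j).1 A := congrArg Subtype.val hfA
    have hAT : Commute (f.1 j).1 Aᵀ := by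
      have h := congrArg Subtype.val hfA.inv_right
      rwa [Submonoid.coe_mul, Submonoid.coe_mul, SO3.coe_inv] at h
    rw [crossMatrix_smul, hv]
    exact (hA.sub_right hAT).smul_right c
  choose θ hθ using fun j => exists_eq_axialMatrix_cos_sin_of_commute hk (hcomm j)
  convert axialTuple_mem_connectedComponent hk θ
  exact Subtype.ext (funext fun j => Subtype.ext (hθ j))

lemma sq_eq_one_of_mem_MMinus {n : ℕ} {f : CommTuples n SO3} (hf : f ∈ MMinus n) (i : Fin n) :
    f.1 i ^ 2 = 1 :=
  not_not.mp fun hi => hf (mem_connectedComponent_oneTuple_of_sq_ne_one f hi)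

theorem path_in_MMinus_rigidity_general (n : ℕ)
    (ω : C(unitInterval, ↥(MMinus n))) (t : unitInterval) :
    (∀ i, coordAt ω i 0 = 1 → coordAt ω i t = 1) ∧
    (∀ i j, coordAt ω i 0 = coordAt ω j 0 → coordAt ω i t = coordAt ω j t) ∧
    (∀ i j,
      (coordAt ω i 0 * coordAt ω i 0 = 1 ∧ coordAt ω i 0 ≠ 1 ∧
        coordAt ω j 0 * coordAt ω j 0 = 1 ∧ coordAt ω j 0 ≠ 1 ∧
        coordAt ω i 0 ≠ coordAt ω j 0) →
      (coordAt ω i t * coordAt ω i t = 1 ∧ coordAt ω i t ≠ 1 ∧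
        coordAt ω j t * coordAt ω j t = 1 ∧ coordAt ω j t ≠ 1 ∧
        coordAt ω i t ≠ coordAt ω j t)) ∧
    (∀ i j k, coordAt ω k 0 = coordAt ω i 0 * coordAt ω j 0 →
      coordAt ω k t = coordAt ω i t * coordAt ω j t) := by
  have hcont i : Continuous (coordAt ω i) :=
    (continuous_apply i).comp (continuous_subtype_val.comp (continuous_subtype_val.comp ω.2))
  have hsq i s : coordAt ω i s ^ 2 = 1 := sq_eq_one_of_mem_MMinus (ω s).2 i
  have hcomm i j s : Commute (coordAt ω i s) (coordAt ω j s) := (ω s).1.2 i j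
  have rigid_one i : coordAt ω i 0 = 1 ↔ coordAt ω i t = 1 :=
    SO3.apply_eq_apply_iff_of_sq_eq_one (hcont i) continuous_const (hsq i) (fun _ => one_pow 2)
      (fun _ => Commute.one_right _) 0 t
  have rigid_eq i j : coordAt ω i 0 = coordAt ω j 0 ↔ coordAt ω i t = coordAt ω j t :=
    SO3.apply_eq_apply_iff_of_sq_eq_one (hcont i) (hcont j) (hsq i) (hsq j) (hcomm i j) 0 t
  have rigid_mul i j k :
      coordAt ω k 0 = coordAt ω i 0 * coordAt ω j 0 ↔
        coordAt ω k t = coordAt ω i t * coordAt ω j t :=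
    SO3.apply_eq_apply_iff_of_sq_eq_one (hcont k) ((hcont i).mul (hcont j)) (hsq k)
      (fun s => by rw [Pi.mul_apply, (hcomm i j s).mul_pow, hsq, hsq, one_mul])
      (fun s => (hcomm k i s).mul_right (hcomm k j s)) 0 t
  refine ⟨fun i => (rigid_one i).1, fun i j => (rigid_eq i j).1, ?_,
    fun i j k => (rigid_mul i j k).1⟩
  rintro i j ⟨-, hi, -, hj, hij⟩
  exact ⟨(sq _).symm.trans (hsq i t), mt (rigid_one i).2 hi, (sq _).symm.trans (hsq j t),
    mt (rigid_one j).2 hj, mt (rigid_eq i j).2 hij⟩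

/-- Let `n ≥ 2` and let `ω(t) = (B₁(t), …, Bₙ(t))` be a continuous path in `Mₙ⁻(SO(3))`.
Then for all `t`: (i) if `Bᵢ(0) = id` then `Bᵢ(t) = id`; (ii) if `Bᵢ(0) = Bⱼ(0)` then
`Bᵢ(t) = Bⱼ(t)`; (iii) if `Bᵢ(0)` and `Bⱼ(0)` are distinct involutions then so are
`Bᵢ(t)` and `Bⱼ(t)`; (iv) if `B_k(0) = Bᵢ(0)·Bⱼ(0)` then `B_k(t) = Bᵢ(t)·Bⱼ(t)`. -/
theorem path_in_MMinus_rigidity (n : ℕ) (hn : 2 ≤ n)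
    (ω : C(unitInterval, ↥(MMinus n))) (t : unitInterval) :
    (∀ i, coordAt ω i 0 = 1 → coordAt ω i t = 1) ∧
    (∀ i j, coordAt ω i 0 = coordAt ω j 0 → coordAt ω i t = coordAt ω j t) ∧
    (∀ i j,
      (coordAt ω i 0 * coordAt ω i 0 = 1 ∧ coordAt ω i 0 ≠ 1 ∧
        coordAt ω j 0 * coordAt ω j 0 = 1 ∧ coordAt ω j 0 ≠ 1 ∧
        coordAt ω i 0 ≠ coordAt ω j 0) →
      (coordAt ω i t * coordAt ω i t = 1 ∧ coordAt ω i t ≠ 1 ∧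
        coordAt ω j t * coordAt ω j t = 1 ∧ coordAt ω j t ≠ 1 ∧
        coordAt ω i t ≠ coordAt ω j t)) ∧
    (∀ i j k, coordAt ω k 0 = coordAt ω i 0 * coordAt ω j 0 →
      coordAt ω k t = coordAt ω i t * coordAt ω j t) :=
  path_in_MMinus_rigidity_general n ω t
end
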